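/- Every dynamic formula is DHT-equivalent to a formula in converse normal form, i.e., a formula in which every occurrence of the converse operator ⁻ is applied directly to the atomic path expression τ. -/
import Mathlib


open Classical

mutual
inductive Formula (A : Type) : Type
  | atom : A → Formula A
  | bot : Formula A
  | top : Formula A
  | box : PExp A → Formula A → Formula A
  | dia : PExp A → Formula A → Formula A
inductive PExp (A : Type) : Type
  | step : PExp A
  | test : Formula A → PExp A
  | plus : PExp A → PExp A → PExp A
  | seq : PExp A → PExp A → PExp A
  | star : PExp A → PExp A
  | conv : PExp A → PExp A
end

/-- An HT-trace of length `len` (possibly infinite, `len = ⊤`). -/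
structure HTTrace (A : Type) where
  len : ℕ∞
  H : ℕ → Set A
  T : ℕ → Set A
  sub : ∀ i, H i ⊆ T i

/-- The total trace ⟨T,T⟩ associated with M = ⟨H,T⟩. -/
def HTTrace.total {A : Type} (M : HTTrace A) : HTTrace A :=
  ⟨M.len, M.T, M.T, fun _ => le_refl _⟩

mutual
/-- DHT satisfaction M,k ⊨ φ. -/
def sat {A : Type} (M : HTTrace A) (k : ℕ) : Formula A → Prop
  | .atom a => a ∈ M.H k
  | .bot => False
  | .top => True
  | .dia ρ φ => ∃ i, rel M ρ k i ∧ sat M i φ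
  | .box ρ φ => (∀ i, rel M ρ k i → sat M i φ) ∧
                (∀ i, rel M.total ρ k i → sat M.total i φ)
/-- DHT accessibility relation ‖ρ‖_M. -/
def rel {A : Type} (M : HTTrace A) : PExp A → ℕ → ℕ → Prop
  | .step, k, i => i = k + 1 ∧ ((i : ℕ∞) < M.len)
  | .test φ, k, i => i = k ∧ sat M k φ
  | .plus ρ₁ ρ₂, k, i => rel M ρ₁ k i ∨ rel M ρ₂ k i
  | .seq ρ₁ ρ₂, k, i => ∃ j, rel M ρ₁ k j ∧ rel M ρ₂ j i
  | .star ρ, k, i => Relation.ReflTransGen (fun a b => rel M ρ a b) k i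
  | .conv ρ, k, i => rel M ρ i k
end

mutual
/-- φ is in converse normal form: every converse is applied directly to τ. -/
def Formula.cnf {A : Type} : Formula A → Prop
  | .atom _ => True
  | .bot => True
  | .top => True
  | .box ρ φ => PExp.cnf ρ ∧ Formula.cnf φ
  | .dia ρ φ => PExp.cnf ρ ∧ Formula.cnf φ
def PExp.cnf {A : Type} : PExp A → Prop
  | .step => True
  | .test φ => Formula.cnf φ
  | .plus ρ₁ ρ₂ => PExp.cnf ρ₁ ∧ PExp.cnf ρ₂
  | .seq ρ₁ ρ₂ => PExp.cnf ρ₁ ∧ PExp.cnf ρ₂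
  | .star ρ => PExp.cnf ρ
  | .conv ρ => ρ = .step
end

mutual
def nF {A : Type} : Formula A → Formula A
  | .atom a => .atom a
  | .bot => .bot
  | .top => .top
  | .box ρ φ => .box (nP ρ) (nF φ)
  | .dia ρ φ => .dia (nP ρ) (nF φ)
def nP {A : Type} : PExp A → PExp A
  | .step => .step
  | .test φ => .test (nF φ)
  | .plus a b => .plus (nP a) (nP b)
  | .seq a b => .seq (nP a) (nP b)
  | .star a => .star (nP a)
  | .conv a => nC a
def nC {A : Type} : PExp A → PExp A
  | .step => .conv .step
  | .test φ => .test (nF φ)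
  | .plus a b => .plus (nC a) (nC b)
  | .seq a b => .seq (nC b) (nC a)
  | .star a => .star (nC a)
  | .conv a => nP a
end

mutual
theorem nF_cnf {A : Type} : ∀ φ : Formula A, Formula.cnf (nF φ)
  | .atom a => trivial
  | .bot => trivial
  | .top => trivial
  | .box ρ φ => ⟨nP_cnf ρ, nF_cnf φ⟩
  | .dia ρ φ => ⟨nP_cnf ρ, nF_cnf φ⟩
theorem nP_cnf {A : Type} : ∀ ρ : PExp A, PExp.cnf (nP ρ)
  | .step => trivial
  | .test φ => nF_cnf φ
  | .plus a b => ⟨nP_cnf a, nP_cnf b⟩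
  | .seq a b => ⟨nP_cnf a, nP_cnf b⟩
  | .star a => nP_cnf a
  | .conv a => nC_cnf a
theorem nC_cnf {A : Type} : ∀ ρ : PExp A, PExp.cnf (nC ρ)
  | .step => rfl
  | .test φ => nF_cnf φ
  | .plus a b => ⟨nC_cnf a, nC_cnf b⟩
  | .seq a b => ⟨nC_cnf b, nC_cnf a⟩
  | .star a => nC_cnf a
  | .conv a => nP_cnf a
end

theorem rtg_congr {r s : ℕ → ℕ → Prop} (h : ∀ a b, r a b ↔ s a b) (a b : ℕ) :
    Relation.ReflTransGen r a b ↔ Relation.ReflTransGen s a b := by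
  have : r = s := funext fun x => funext fun y => propext (h x y)
  rw [this]

theorem rtg_swap {r : ℕ → ℕ → Prop} (a b : ℕ) :
    Relation.ReflTransGen r a b ↔ Relation.ReflTransGen (fun x y => r y x) b a := by
  constructor
  · intro h; induction h with
    | refl => exact Relation.ReflTransGen.refl
    | tail _ h ih => exact Relation.ReflTransGen.head h ih
  · intro h; induction h with
    | refl => exact Relation.ReflTransGen.refl
    | tail _ h ih => exact Relation.ReflTransGen.head h ih

mutual
theorem eqF {A : Type} : ∀ (φ : Formula A) (M : HTTrace A) (k : ℕ),
    sat M k φ ↔ sat M k (nF φ)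
  | .atom a, M, k => Iff.rfl
  | .bot, M, k => Iff.rfl
  | .top, M, k => Iff.rfl
  | .dia ρ φ, M, k => by
      simp only [sat, nF]
      exact exists_congr fun i => and_congr (eqP ρ M k i) (eqF φ M i)
  | .box ρ φ, M, k => by
      simp only [sat, nF]
      exact and_congr
        (forall_congr' fun i => imp_congr (eqP ρ M k i) (eqF φ M i))
        (forall_congr' fun i => imp_congr (eqP ρ M.total k i) (eqF φ M.total i))
theorem eqP {A : Type} : ∀ (ρ : PExp A) (M : HTTrace A) (k i : ℕ),
    rel M ρ k i ↔ rel M (nP ρ) k i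
  | .step, M, k, i => Iff.rfl
  | .test φ, M, k, i => by
      simp only [rel, nP]; exact and_congr Iff.rfl (eqF φ M k)
  | .plus a b, M, k, i => by
      simp only [rel, nP]; exact or_congr (eqP a M k i) (eqP b M k i)
  | .seq a b, M, k, i => by
      simp only [rel, nP]
      exact exists_congr fun j => and_congr (eqP a M k j) (eqP b M j i)
  | .star a, M, k, i => by
      simp only [rel, nP]
      exact rtg_congr (fun x y => eqP a M x y) k i
  | .conv a, M, k, i => by
      simp only [rel, nP]; exact eqC a M k i
theorem eqC {A : Type} : ∀ (ρ : PExp A) (M : HTTrace A) (k i : ℕ),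
    rel M ρ i k ↔ rel M (nC ρ) k i
  | .step, M, k, i => Iff.rfl
  | .test φ, M, k, i => by
      simp only [rel, nC]
      constructor
      · rintro ⟨h1, h2⟩; subst h1; exact ⟨rfl, (eqF φ M _).mp h2⟩
      · rintro ⟨h1, h2⟩; subst h1; exact ⟨rfl, (eqF φ M _).mpr h2⟩
  | .plus a b, M, k, i => by
      simp only [rel, nC]; exact or_congr (eqC a M k i) (eqC b M k i)
  | .seq a b, M, k, i => by
      simp only [rel, nC]
      constructor
      · rintro ⟨j, h1, h2⟩; exact ⟨j, (eqC b M k j).mp h2, (eqC a M j i).mp h1⟩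
      · rintro ⟨j, h1, h2⟩; exact ⟨j, (eqC a M j i).mpr h2, (eqC b M k j).mpr h1⟩
  | .star a, M, k, i => by
      simp only [rel, nC]
      rw [rtg_swap]
      exact rtg_congr (fun x y => eqC a M x y) k i
  | .conv a, M, k, i => by
      simp only [rel, nC]; exact eqP a M k i
end

/-- Every dynamic formula is DHT-equivalent to one in converse normal form. -/
theorem stmt7 {A : Type} (φ : Formula A) :
    ∃ ψ : Formula A, Formula.cnf ψ ∧ ∀ (M : HTTrace A) (k : ℕ), sat M k φ ↔ sat M k ψ :=
  ⟨nF φ, nF_cnf φ, fun M k => eqF φ M k⟩
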